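/- Let 0 < ε ≤ 1/4 and C₀ ≥ 1. There is a constant C = C(ε, C₀) such that the following holds. Let a : ℕ → ℝ satisfy |a(n)| ≤ C₀ n^{1/4+ε} for all n ≥ 1. Let p be a prime, let d ∈ {1, p}, let M, N be real numbers with 1 ≤ M ≤ N and MN ≤ p^{2+ε}, and let V₁, V₂ : ℝ → ℝ vanish outside [1,2] with |V₁|, |V₂| ≤ 1. Then | (d/√(MN)) ∑_{m ≡ n (mod d), m ≠ n, gcd(mn,p)=1} a(m) a(n) V₁(m/M) V₂(n/N) − (d/√(MN)) ∑_{m ≡ n (mod d), m ≠ n} a(m) a(n) V₁(m/M) V₂(n/N) | ≤ C p^{1/2+4ε}, where both sums run over pairs of positive integers (m, n) with the indicated conditions. -/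

import Mathlib

open Finset

/-!
Only pairs with `p ∣ mn` distinguish the two sums, and the weights confine both sums to
`m ≤ 2M`, `n ≤ 2N`, where each term is at most `C₀² (4MN)^{1/4+ε}`. There are at most
`2 (2M)(2N) / (dp)` such pairs with `d ∣ m - n`: for `d = 1` one of `m, n` is a multiple of `p`,
for `d = p` both are. The difference is therefore `≪ (MN)^{3/4+ε} / p ≤ p^{(2+ε)(3/4+ε) - 1}`.
-/

lemma abs_tsum_ite_sub_tsum_ite_le {α : Type*} {P Q : α → Prop} [DecidablePred P]
    [DecidablePred Q] (hQP : ∀ x, Q x → P x) {f : α → ℝ} {S : Finset α}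
    (hfS : ∀ x ∉ S, f x = 0) {B : ℝ} (hfB : ∀ x ∈ S, |f x| ≤ B) :
    |(∑' x, if Q x then f x else 0) - ∑' x, if P x then f x else 0|
      ≤ B * #{x ∈ S | P x ∧ ¬Q x} := by
  have hsupp (R : α → Prop) [DecidablePred R] : ∀ x ∉ S, (if R x then f x else 0) = 0 :=
    fun x hx => by simp [hfS x hx]
  rw [tsum_eq_sum (hsupp Q), tsum_eq_sum (hsupp P), ← sum_sub_distrib]
  calc |∑ x ∈ S, ((if Q x then f x else 0) - if P x then f x else 0)|
      = |∑ x ∈ S with P x ∧ ¬Q x, f x| := by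
        rw [sum_filter, ← abs_neg, ← sum_neg_distrib]
        refine congrArg _ (sum_congr rfl fun x _ => ?_)
        by_cases hQ : Q x
        · simp [hQ, hQP x hQ]
        · by_cases hP : P x <;> simp [hQ, hP]
    _ ≤ ∑ x ∈ S with P x ∧ ¬Q x, |f x| := abs_sum_le_sum_abs _ _
    _ ≤ ∑ x ∈ S with P x ∧ ¬Q x, B := sum_le_sum fun x hx => hfB x (mem_filter.1 hx).1
    _ = B * #{x ∈ S | P x ∧ ¬Q x} := by rw [sum_const, nsmul_eq_mul, mul_comm]

lemma mem_Ioc_floor_of_apply_div_ne_zero {V : ℝ → ℝ}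
    (hV : ∀ x ∉ Set.Icc (1 : ℝ) 2, V x = 0) {M : ℝ} (hM : 0 < M) {m : ℕ}
    (hm : V (m / M) ≠ 0) : m ∈ Ioc 0 ⌊2 * M⌋₊ := by
  obtain ⟨hlo, hhi⟩ : (m : ℝ) / M ∈ Set.Icc 1 2 := not_imp_comm.1 (hV _) hm
  rw [le_div_iff₀ hM] at hlo
  rw [div_le_iff₀ hM] at hhi
  refine mem_Ioc.2 ⟨?_, Nat.le_floor (by linarith)⟩
  exact_mod_cast (show (0 : ℝ) < m by linarith)

lemma abs_le_of_mem_Ioc_floor {a : ℕ → ℝ} {C₀ θ : ℝ} (hC₀ : 0 ≤ C₀) (hθ : 0 ≤ θ)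
    (ha : ∀ n : ℕ, 1 ≤ n → |a n| ≤ C₀ * (n : ℝ) ^ θ) {M : ℝ} (hM : 0 ≤ M) {m : ℕ}
    (hm : m ∈ Ioc 0 ⌊2 * M⌋₊) : |a m| ≤ C₀ * (2 * M) ^ θ := by
  obtain ⟨hm0, hmK⟩ := mem_Ioc.1 hm
  refine (ha m hm0).trans ?_
  gcongr
  exact (Nat.le_floor_iff (by positivity)).1 hmK

lemma card_filter_prime_dvd_mul_le {p : ℕ} (hp : p.Prime) (K₁ K₂ : ℕ) :
    #{x ∈ Ioc 0 K₁ ×ˢ Ioc 0 K₂ | p ∣ x.1 * x.2} ≤ K₁ / p * K₂ + K₁ * (K₂ / p) := by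
  calc #{x ∈ Ioc 0 K₁ ×ˢ Ioc 0 K₂ | p ∣ x.1 * x.2}
      ≤ #({m ∈ Ioc 0 K₁ | p ∣ m} ×ˢ Ioc 0 K₂ ∪ Ioc 0 K₁ ×ˢ {n ∈ Ioc 0 K₂ | p ∣ n}) := by
        refine card_le_card fun x hx => ?_
        simp only [mem_filter, mem_product, mem_union] at hx ⊢
        rcases hp.dvd_mul.1 hx.2 with h | h <;> tauto
    _ ≤ K₁ / p * K₂ + K₁ * (K₂ / p) := by
        refine (card_union_le _ _).trans_eq ?_
        simp only [card_product, Nat.Ioc_filter_dvd_card_eq_div, Nat.card_Ioc, Nat.sub_zero]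

lemma card_filter_prime_dvd_mul_and_dvd_sub_le {p : ℕ} (hp : p.Prime) (K₁ K₂ : ℕ) :
    #{x ∈ Ioc 0 K₁ ×ˢ Ioc 0 K₂ | p ∣ x.1 * x.2 ∧ (p : ℤ) ∣ (x.1 : ℤ) - x.2}
      ≤ K₁ / p * (K₂ / p) := by
  calc #{x ∈ Ioc 0 K₁ ×ˢ Ioc 0 K₂ | p ∣ x.1 * x.2 ∧ (p : ℤ) ∣ (x.1 : ℤ) - x.2}
      ≤ #({m ∈ Ioc 0 K₁ | p ∣ m} ×ˢ {n ∈ Ioc 0 K₂ | p ∣ n}) := by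
        refine card_le_card fun x hx => ?_
        simp only [mem_filter, mem_product] at hx ⊢
        obtain ⟨⟨hm, hn⟩, hpmn, hsub⟩ := hx
        have hboth : p ∣ x.1 ∧ p ∣ x.2 := by
          rcases hp.dvd_mul.1 hpmn with h | h
          · exact ⟨h, Int.natCast_dvd_natCast.1
              ((dvd_sub_right (Int.natCast_dvd_natCast.2 h)).1 hsub)⟩
          · exact ⟨Int.natCast_dvd_natCast.1
              ((dvd_sub_left (Int.natCast_dvd_natCast.2 h)).1 hsub), h⟩
        exact ⟨⟨hm, hboth.1⟩, hn, hboth.2⟩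
    _ = K₁ / p * (K₂ / p) := by
        rw [card_product, Nat.Ioc_filter_dvd_card_eq_div, Nat.Ioc_filter_dvd_card_eq_div]

lemma cast_mul_card_filter_prime_dvd_mul_le {p : ℕ} (hp : p.Prime) {d : ℕ} (hd : d = 1 ∨ d = p)
    (K₁ K₂ : ℕ) :
    (d : ℝ) * #{x ∈ Ioc 0 K₁ ×ˢ Ioc 0 K₂ | p ∣ x.1 * x.2 ∧ (d : ℤ) ∣ (x.1 : ℤ) - x.2}
      ≤ 2 * K₁ * K₂ / p := by
  have hp0 : (0 : ℝ) < p := by exact_mod_cast hp.pos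
  rcases hd with rfl | rfl
  · have h := card_filter_prime_dvd_mul_le hp K₁ K₂
    simp only [Nat.cast_one, one_dvd, and_true, one_mul]
    calc (#{x ∈ Ioc 0 K₁ ×ˢ Ioc 0 K₂ | p ∣ x.1 * x.2} : ℝ)
        ≤ ((K₁ / p : ℕ) : ℝ) * K₂ + K₁ * ((K₂ / p : ℕ) : ℝ) := by exact_mod_cast h
      _ ≤ (K₁ / p : ℝ) * K₂ + K₁ * (K₂ / p : ℝ) := by gcongr <;> exact Nat.cast_div_le
      _ = 2 * K₁ * K₂ / p := by ring
  · have h := card_filter_prime_dvd_mul_and_dvd_sub_le hp K₁ K₂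
    calc (d : ℝ) * #{x ∈ Ioc 0 K₁ ×ˢ Ioc 0 K₂ | d ∣ x.1 * x.2 ∧ (d : ℤ) ∣ (x.1 : ℤ) - x.2}
        ≤ d * (((K₁ / d : ℕ) : ℝ) * ((K₂ / d : ℕ) : ℝ)) := by gcongr; exact_mod_cast h
      _ ≤ d * ((K₁ / d : ℝ) * (K₂ / d : ℝ)) := by gcongr <;> exact Nat.cast_div_le
      _ = K₁ * K₂ / d := by field_simp
      _ ≤ 2 * K₁ * K₂ / d := by gcongr; exact le_mul_of_one_le_left (Nat.cast_nonneg _) one_le_two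

lemma four_mul_rpow_le {θ X : ℝ} (hθ : θ ≤ 1 / 2) (hX : 0 ≤ X) :
    (4 * X) ^ θ ≤ 2 * X ^ θ := by
  rw [Real.mul_rpow (by norm_num) hX]
  gcongr
  calc (4 : ℝ) ^ θ ≤ 4 ^ (1 / 2 : ℝ) := Real.rpow_le_rpow_of_exponent_le (by norm_num) hθ
    _ = 2 := by
        rw [show (4 : ℝ) = 2 ^ (2 : ℝ) by norm_num, ← Real.rpow_mul (by norm_num)]
        norm_num

lemma rpow_mul_div_sqrt_le {ε X p : ℝ} (hε : 0 < ε) (hε' : ε ≤ 1 / 4) (hp : 1 ≤ p)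
    (hX : 0 < X) (hXp : X ≤ p ^ (2 + ε)) :
    (4 * X) ^ (1 / 4 + ε) * (8 * X / p) / √X ≤ 16 * p ^ (1 / 2 + 4 * ε) := by
  have hp0 : 0 < p := by linarith
  have hpow : X ^ (1 / 4 + ε) * X / √X = X ^ (3 / 4 + ε) := by
    rw [Real.sqrt_eq_rpow, ← Real.rpow_add_one hX.ne', ← Real.rpow_sub hX]
    ring_nf
  -- `(2 + ε) (3/4 + ε) - 1 = 1/2 + 11ε/4 + ε² ≤ 1/2 + 4ε` since `ε ≤ 1/4`
  have hexp : X ^ (3 / 4 + ε) / p ≤ p ^ (1 / 2 + 4 * ε) :=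
    calc X ^ (3 / 4 + ε) / p ≤ p ^ ((2 + ε) * (3 / 4 + ε)) / p := by
          rw [Real.rpow_mul hp0.le]
          gcongr
      _ = p ^ ((2 + ε) * (3 / 4 + ε) - 1) := by rw [Real.rpow_sub hp0, Real.rpow_one]
      _ ≤ p ^ (1 / 2 + 4 * ε) := Real.rpow_le_rpow_of_exponent_le hp (by nlinarith)
  calc (4 * X) ^ (1 / 4 + ε) * (8 * X / p) / √X
      ≤ 2 * X ^ (1 / 4 + ε) * (8 * X / p) / √X := by
        gcongr
        exact four_mul_rpow_le (by linarith) hX.le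
    _ = 16 * (X ^ (1 / 4 + ε) * X / √X / p) := by ring
    _ ≤ 16 * p ^ (1 / 2 + 4 * ε) := by rw [hpow]; gcongr

noncomputable def dyadicBox (M N : ℝ) : Finset (ℕ × ℕ) := Ioc 0 ⌊2 * M⌋₊ ×ˢ Ioc 0 ⌊2 * N⌋₊

section WeightedProduct

variable {a : ℕ → ℝ} {V₁ V₂ : ℝ → ℝ} {M N : ℝ}

lemma mul_mul_mul_eq_zero_of_notMem_dyadicBox (hV₁ : ∀ x ∉ Set.Icc (1 : ℝ) 2, V₁ x = 0)
    (hV₂ : ∀ x ∉ Set.Icc (1 : ℝ) 2, V₂ x = 0) (hM : 0 < M) (hN : 0 < N) {x : ℕ × ℕ}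
    (hx : x ∉ dyadicBox M N) : a x.1 * a x.2 * V₁ ((x.1 : ℝ) / M) * V₂ ((x.2 : ℝ) / N) = 0 := by
  by_contra h
  simp only [mul_ne_zero_iff] at h
  exact hx (mem_product.2 ⟨mem_Ioc_floor_of_apply_div_ne_zero hV₁ hM h.1.2,
    mem_Ioc_floor_of_apply_div_ne_zero hV₂ hN h.2⟩)

lemma abs_mul_mul_mul_le_of_mem_dyadicBox {C₀ θ : ℝ} (hC₀ : 0 ≤ C₀) (hθ : 0 ≤ θ)
    (ha : ∀ n : ℕ, 1 ≤ n → |a n| ≤ C₀ * (n : ℝ) ^ θ) (hV₁ : ∀ x, |V₁ x| ≤ 1)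
    (hV₂ : ∀ x, |V₂ x| ≤ 1) (hM : 0 ≤ M) (hN : 0 ≤ N) {x : ℕ × ℕ} (hx : x ∈ dyadicBox M N) :
    |a x.1 * a x.2 * V₁ ((x.1 : ℝ) / M) * V₂ ((x.2 : ℝ) / N)| ≤ C₀ ^ 2 * (4 * (M * N)) ^ θ := by
  obtain ⟨hm, hn⟩ := mem_product.1 hx
  calc |a x.1 * a x.2 * V₁ ((x.1 : ℝ) / M) * V₂ ((x.2 : ℝ) / N)|
      = |a x.1| * |a x.2| * |V₁ ((x.1 : ℝ) / M)| * |V₂ ((x.2 : ℝ) / N)| := by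
        simp only [abs_mul]
    _ ≤ C₀ * (2 * M) ^ θ * (C₀ * (2 * N) ^ θ) * 1 * 1 := by
        gcongr
        exacts [abs_le_of_mem_Ioc_floor hC₀ hθ ha hM hm, abs_le_of_mem_Ioc_floor hC₀ hθ ha hN hn,
          hV₁ _, hV₂ _]
    _ = C₀ ^ 2 * (4 * (M * N)) ^ θ := by
        rw [show 4 * (M * N) = 2 * M * (2 * N) by ring,
          Real.mul_rpow (x := 2 * M) (y := 2 * N) (by positivity) (by positivity)]
        ring

end WeightedProduct

theorem stmt3 (ε C₀ : ℝ) (hε : 0 < ε) (hε' : ε ≤ 1/4) (hC₀ : 1 ≤ C₀) :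
    ∃ C : ℝ, 0 < C ∧
    ∀ a : ℕ → ℝ,
      (∀ n : ℕ, 1 ≤ n → |a n| ≤ C₀ * (n : ℝ) ^ ((1 : ℝ)/4 + ε)) →
      ∀ p : ℕ, p.Prime → ∀ d : ℕ, (d = 1 ∨ d = p) →
      ∀ M N : ℝ, 1 ≤ M → M ≤ N → M * N ≤ (p : ℝ) ^ ((2 : ℝ) + ε) →
      ∀ V₁ V₂ : ℝ → ℝ,
        (∀ x : ℝ, x ∉ Set.Icc (1 : ℝ) 2 → V₁ x = 0) → (∀ x : ℝ, |V₁ x| ≤ 1) →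
        (∀ x : ℝ, x ∉ Set.Icc (1 : ℝ) 2 → V₂ x = 0) → (∀ x : ℝ, |V₂ x| ≤ 1) →
        |((d : ℝ) / Real.sqrt (M * N)) * (∑' mn : ℕ × ℕ,
            (if 1 ≤ mn.1 ∧ 1 ≤ mn.2 ∧ (d : ℤ) ∣ ((mn.1 : ℤ) - (mn.2 : ℤ)) ∧ mn.1 ≠ mn.2
                ∧ Nat.Coprime (mn.1 * mn.2) p
             then a mn.1 * a mn.2 * V₁ ((mn.1 : ℝ) / M) * V₂ ((mn.2 : ℝ) / N) else 0))
          - ((d : ℝ) / Real.sqrt (M * N)) * (∑' mn : ℕ × ℕ,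
            (if 1 ≤ mn.1 ∧ 1 ≤ mn.2 ∧ (d : ℤ) ∣ ((mn.1 : ℤ) - (mn.2 : ℤ)) ∧ mn.1 ≠ mn.2
             then a mn.1 * a mn.2 * V₁ ((mn.1 : ℝ) / M) * V₂ ((mn.2 : ℝ) / N) else 0))|
        ≤ C * (p : ℝ) ^ ((1 : ℝ)/2 + 4 * ε) := by
  refine ⟨16 * C₀ ^ 2, by positivity, ?_⟩
  intro a ha p hp d hd M N hM hMN hMNp V₁ V₂ hV₁0 hV₁b hV₂0 hV₂b
  have hM0 : 0 < M := by linarith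
  have hN0 : 0 < N := by linarith
  set T := {x ∈ dyadicBox M N | p ∣ x.1 * x.2 ∧ (d : ℤ) ∣ (x.1 : ℤ) - x.2}
  have hcount : (d : ℝ) * #T ≤ 8 * (M * N) / p := by
    refine (cast_mul_card_filter_prime_dvd_mul_le hp hd _ _).trans ?_
    have hK₁ : (⌊2 * M⌋₊ : ℝ) ≤ 2 * M := Nat.floor_le (by positivity)
    have hK₂ : (⌊2 * N⌋₊ : ℝ) ≤ 2 * N := Nat.floor_le (by positivity)
    calc 2 * (⌊2 * M⌋₊ : ℝ) * ⌊2 * N⌋₊ / p ≤ 2 * (2 * M) * (2 * N) / p := by gcongr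
      _ = 8 * (M * N) / p := by ring
  rw [← mul_sub, abs_mul, abs_of_nonneg (by positivity)]
  refine (mul_le_mul_of_nonneg_left (abs_tsum_ite_sub_tsum_ite_le (fun x h => ?_)
    (fun x => mul_mul_mul_eq_zero_of_notMem_dyadicBox hV₁0 hV₂0 hM0 hN0)
    (fun x => abs_mul_mul_mul_le_of_mem_dyadicBox (by linarith) (by linarith) ha hV₁b hV₂b
      hM0.le hN0.le))
    (by positivity)).trans ?_
  · exact ⟨h.1, h.2.1, h.2.2.1, h.2.2.2.1⟩
  calc _ ≤ d / √(M * N) * (C₀ ^ 2 * (4 * (M * N)) ^ (1 / 4 + ε) * #T) := by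
        gcongr
        refine monotone_filter_right _ fun x _ h => ⟨?_, h.1.2.2.1⟩
        by_contra hpx
        exact h.2 ⟨h.1.1, h.1.2.1, h.1.2.2.1, h.1.2.2.2, (hp.coprime_iff_not_dvd.2 hpx).symm⟩
    _ = C₀ ^ 2 * ((4 * (M * N)) ^ (1 / 4 + ε) * (d * #T) / √(M * N)) := by ring
    _ ≤ C₀ ^ 2 * ((4 * (M * N)) ^ (1 / 4 + ε) * (8 * (M * N) / p) / √(M * N)) := by gcongr
    _ ≤ C₀ ^ 2 * (16 * (p : ℝ) ^ (1 / 2 + 4 * ε)) := by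
        gcongr
        exact rpow_mul_div_sqrt_le hε hε' (by exact_mod_cast hp.one_lt.le) (by positivity) hMNp
    _ = 16 * C₀ ^ 2 * (p : ℝ) ^ ((1 : ℝ) / 2 + 4 * ε) := by ring
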